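/- arXiv:cond-mat/0410435 — 3 statements merged into one kernel-verified Lean document; each statement's English description precedes it below -/
import Mathlib

section
/- The Curie-Weiss log-partition function is subadditive: for N = N₁ + N₂, log Z_N(β,h) ≤ log Z_{N₁}(β,h) + log Z_{N₂}(β,h). -/
open Finset Real

/-- The value `±1` of an Ising spin encoded by a Boolean. -/
def spin (b : Bool) : ℝ := if b then 1 else -1

/-- Magnetization of a configuration of `N` Ising spins. -/
noncomputable def cwMag (N : ℕ) (σ : Fin N → Bool) : ℝ := (∑ i, spin (σ i)) / N

/-- Curie-Weiss partition function `Z_N(β,h) = ∑_σ exp((β/2) N m(σ)² + β h ∑ᵢ σᵢ)`. -/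
noncomputable def cwZ (N : ℕ) (β h : ℝ) : ℝ :=
  ∑ σ : Fin N → Bool,
    Real.exp (β / 2 * N * cwMag N σ ^ 2 + β * h * ∑ i, spin (σ i))

lemma cw_key (a b p q : ℝ) (hp : 0 < p) (hq : 0 < q) :
    (a + b) ^ 2 / (p + q) ≤ a ^ 2 / p + b ^ 2 / q := by
  rw [div_add_div _ _ hp.ne' hq.ne', div_le_div_iff₀ (by positivity) (by positivity)]
  nlinarith [sq_nonneg (a * q - b * p), mul_pos hp hq]

lemma cwZ_pos (N : ℕ) (β h : ℝ) : 0 < cwZ N β h :=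
  Finset.sum_pos (fun σ _ => Real.exp_pos _) Finset.univ_nonempty

lemma cwZ_eq (N : ℕ) (hN : 0 < N) (β h : ℝ) :
    cwZ N β h = ∑ σ : Fin N → Bool,
      Real.exp (β / 2 * ((∑ i, spin (σ i)) ^ 2 / N) + β * h * ∑ i, spin (σ i)) := by
  unfold cwZ cwMag
  congr 1; ext σ
  have hN' : (N : ℝ) ≠ 0 := Nat.cast_ne_zero.mpr hN.ne'
  congr 1
  field_simp

/-- The Curie-Weiss log-partition function is subadditive:
`log Z_{N₁+N₂}(β,h) ≤ log Z_{N₁}(β,h) + log Z_{N₂}(β,h)`. -/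
theorem cw_logZ_subadditive (β h : ℝ) (hβ : 0 ≤ β) (N₁ N₂ : ℕ)
    (h₁ : 1 ≤ N₁) (h₂ : 1 ≤ N₂) :
    Real.log (cwZ (N₁ + N₂) β h) ≤ Real.log (cwZ N₁ β h) + Real.log (cwZ N₂ β h) := by
  have hZ1 := cwZ_pos N₁ β h
  have hZ2 := cwZ_pos N₂ β h
  rw [← Real.log_mul hZ1.ne' hZ2.ne']
  apply Real.log_le_log (cwZ_pos _ β h)
  rw [cwZ_eq (N₁ + N₂) (by omega) β h, cwZ_eq N₁ (by omega) β h, cwZ_eq N₂ (by omega) β h,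
    Finset.sum_mul_sum]
  set e : ((Fin N₁ → Bool) × (Fin N₂ → Bool)) ≃ (Fin (N₁ + N₂) → Bool) :=
    ((Equiv.sumArrowEquivProdArrow (Fin N₁) (Fin N₂) Bool).symm).trans
      (Equiv.arrowCongr finSumFinEquiv (Equiv.refl Bool)) with he
  rw [← Equiv.sum_comp e, Fintype.sum_prod_type]
  apply Finset.sum_le_sum; intro σ₁ _
  apply Finset.sum_le_sum; intro σ₂ _
  rw [← Real.exp_add]
  apply Real.exp_le_exp.mpr
  have hsum : ∑ i, spin (e (σ₁, σ₂) i) = (∑ i, spin (σ₁ i)) + ∑ i, spin (σ₂ i) := by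
    rw [he]
    simp only [Equiv.trans_apply, Equiv.arrowCongr_apply, Equiv.sumArrowEquivProdArrow,
      Equiv.coe_fn_symm_mk, Equiv.refl_apply, Function.comp]
    rw [← finSumFinEquiv.sum_comp]
    simp [Fintype.sum_sum_type]
  rw [hsum]
  set a := ∑ i, spin (σ₁ i)
  set b := ∑ i, spin (σ₂ i)
  have hk : (a + b) ^ 2 / ((N₁ : ℝ) + N₂) ≤ a ^ 2 / N₁ + b ^ 2 / N₂ := by
    apply cw_key <;> · exact_mod_cast by omega
  have hβ2 : (0:ℝ) ≤ β / 2 := by linarith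
  have := mul_le_mul_of_nonneg_left hk hβ2
  push_cast
  nlinarith [this]
end

section
/- For the Curie-Weiss model, for every N ≥ 1 and every trial parameter M ∈ ℝ, N^{-1} log Z_N(β,h) ≥ log 2 + log cosh(β(h+M)) − (β/2) M². -/
open Finset Real

/-!
Since `m² ≥ 2mM - M²` and `β ≥ 0`, each Boltzmann weight is bounded below by
`exp(-(β/2) N M²) · exp(β(h + M) ∑ᵢ σᵢ)`, a product weight under which the spins decouple;
summing over configurations gives `Z_N ≥ exp(-(β/2) N M²) (2 cosh(β(h + M)))^N`.
-/

lemma sum_exp_mul_spin (x : ℝ) : ∑ b : Bool, exp (x * spin b) = 2 * cosh x := by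
  simp only [Fintype.sum_bool, spin, if_true, if_false, Bool.false_eq_true, cosh_eq]
  ring_nf

lemma sum_exp_mul_sum_spin {ι : Type*} [Fintype ι] [DecidableEq ι] (x : ℝ) :
    ∑ σ : ι → Bool, exp (x * ∑ i, spin (σ i)) = (2 * cosh x) ^ Fintype.card ι := by
  simp only [mul_sum, exp_sum]
  rw [← Fintype.prod_sum (fun _ b => exp (x * spin b)), sum_exp_mul_spin, prod_const,
    card_univ]

lemma cwMag_mul_natCast {N : ℕ} (hN : N ≠ 0) (σ : Fin N → Bool) :
    cwMag N σ * N = ∑ i, spin (σ i) :=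
  div_mul_cancel₀ _ (Nat.cast_ne_zero.mpr hN)

lemma exp_mean_field_le_cw_weight {β : ℝ} (hβ : 0 ≤ β) (h M : ℝ) {N : ℕ} (hN : N ≠ 0)
    (σ : Fin N → Bool) :
    exp (-(β / 2 * N * M ^ 2)) * exp (β * (h + M) * ∑ i, spin (σ i))
      ≤ exp (β / 2 * N * cwMag N σ ^ 2 + β * h * ∑ i, spin (σ i)) := by
  rw [← exp_add, exp_le_exp, ← cwMag_mul_natCast hN σ]
  have hquad : 2 * cwMag N σ * M ≤ cwMag N σ ^ 2 + M ^ 2 := two_mul_le_add_sq _ _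
  have hcoef : 0 ≤ β / 2 * N := by positivity
  nlinarith [mul_le_mul_of_nonneg_left hquad hcoef]

lemma exp_mul_two_mul_cosh_pow_le_cwZ {β : ℝ} (hβ : 0 ≤ β) (h M : ℝ) {N : ℕ} (hN : N ≠ 0) :
    exp (-(β / 2 * N * M ^ 2)) * (2 * cosh (β * (h + M))) ^ N ≤ cwZ N β h := by
  calc exp (-(β / 2 * N * M ^ 2)) * (2 * cosh (β * (h + M))) ^ N
      = ∑ σ : Fin N → Bool,
          exp (-(β / 2 * N * M ^ 2)) * exp (β * (h + M) * ∑ i, spin (σ i)) := by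
        rw [← mul_sum, sum_exp_mul_sum_spin, Fintype.card_fin]
    _ ≤ cwZ N β h := sum_le_sum fun σ _ => exp_mean_field_le_cw_weight hβ h M hN σ

/-- uniform lower bound for the Curie-Weiss free energy:
for every `N ≥ 1` and every trial parameter `M`,
`N⁻¹ log Z_N(β,h) ≥ log 2 + log cosh(β(h+M)) − (β/2) M²`. -/
theorem cw_free_energy_lower_bound (β h : ℝ) (hβ : 0 ≤ β) (N : ℕ) (hN : 1 ≤ N) (M : ℝ) :
    Real.log 2 + Real.log (Real.cosh (β * (h + M))) - β / 2 * M ^ 2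
      ≤ Real.log (cwZ N β h) / N := by
  have hN0 : N ≠ 0 := Nat.one_le_iff_ne_zero.mp hN
  have hNpos : (0 : ℝ) < N := by positivity
  have hlog := log_le_log (by positivity) (exp_mul_two_mul_cosh_pow_le_cwZ hβ h M hN0)
  rw [log_mul (exp_pos _).ne' (by positivity), log_exp, log_pow,
    log_mul two_ne_zero (cosh_pos _).ne'] at hlog
  rw [le_div_iff₀ hNpos]
  linarith
end

section
/- For the Curie-Weiss model, N^{-1} log Z_N(β,h) ≤ sup_M (log 2 + log cosh(β(h+M)) − (β/2) M²) + N^{-1} log(N+1), where the supremum is over the N+1 possible values of the magnetization (equivalently over all M ∈ ℝ). -/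
open Finset Real

lemma cw_exp_sum (N : ℕ) (t : ℝ) :
    ∑ σ : Fin N → Bool, Real.exp (t * ∑ i, spin (σ i))
      = (Real.exp t + Real.exp (-t)) ^ N := by
  have h1 : ∀ σ : Fin N → Bool,
      Real.exp (t * ∑ i, spin (σ i)) = ∏ i, Real.exp (t * spin (σ i)) := by
    intro σ; rw [Finset.mul_sum, Real.exp_sum]
  simp_rw [h1]
  have h2 := Finset.prod_univ_sum (fun _ : Fin N => (Finset.univ : Finset Bool))
    (fun _ b => Real.exp (t * spin b))
  rw [Fintype.piFinset_univ] at h2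
  rw [← h2]
  have h3 : ∀ i : Fin N, ∑ b : Bool, Real.exp (t * spin b)
      = Real.exp t + Real.exp (-t) := by
    intro i
    rw [Fintype.sum_bool]
    simp [spin]
  rw [Finset.prod_congr rfl (fun i _ => h3 i), Finset.prod_const, Finset.card_univ,
    Fintype.card_fin]

lemma cw_spin_sum (N : ℕ) (σ : Fin N → Bool) :
    ∑ i, spin (σ i) = 2 * ((Finset.univ.filter fun i => σ i = true).card : ℝ) - N := by
  have h1 : ∀ i, spin (σ i) = 2 * (if σ i = true then (1:ℝ) else 0) - 1 := by
    intro i; cases σ i <;> norm_num [spin]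
  simp_rw [h1]
  rw [Finset.sum_sub_distrib, ← Finset.mul_sum, Finset.sum_boole, Finset.sum_const,
    Finset.card_univ, Fintype.card_fin]
  simp

/-- upper bound for the Curie-Weiss free energy:
`N⁻¹ log Z_N(β,h) ≤ sup_M (log 2 + log cosh(β(h+M)) − (β/2)M²) + N⁻¹ log(N+1)`. -/
theorem cw_free_energy_upper_bound (β h : ℝ) (hβ : 0 ≤ β) (N : ℕ) (hN : 1 ≤ N) :
    Real.log (cwZ N β h) / N
      ≤ (⨆ M : ℝ, (Real.log 2 + Real.log (Real.cosh (β * (h + M))) - β / 2 * M ^ 2))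
        + Real.log (N + 1) / N := by
  have hNpos : (0:ℝ) < N := by exact_mod_cast hN
  set F : ℝ → ℝ := fun M => Real.log 2 + Real.log (Real.cosh (β * (h + M))) - β / 2 * M ^ 2
    with hF
  have hbdd : BddAbove (Set.range F) := by
    refine ⟨Real.log 2 + |β * h| + β / 2, ?_⟩
    rintro _ ⟨M, rfl⟩
    have hc : Real.log (Real.cosh (β * (h + M))) ≤ |β * (h + M)| := by
      rw [Real.log_le_iff_le_exp (Real.cosh_pos _)]
      set x := β * (h + M)
      rw [Real.cosh_eq]
      have e1 : Real.exp x ≤ Real.exp |x| := Real.exp_le_exp.2 (le_abs_self x)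
      have e2 : Real.exp (-x) ≤ Real.exp |x| := Real.exp_le_exp.2 (neg_le_abs x)
      linarith
    have habs : |β * (h + M)| ≤ |β * h| + β * |M| := by
      have he : β * (h + M) = β * h + β * M := by ring
      rw [he]
      refine (abs_add_le _ _).trans ?_
      rw [abs_mul β M, abs_of_nonneg hβ]
    have hM : β * |M| - β / 2 * M ^ 2 ≤ β / 2 := by
      nlinarith [sq_nonneg (|M| - 1), sq_abs M, abs_nonneg M]
    simp only [hF]
    nlinarith [hc]
  set S := ⨆ M : ℝ, F M with hS
  have key : cwZ N β h ≤ (N + 1) * Real.exp (N * S) := by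
    rw [cwZ]
    rw [← Finset.sum_fiberwise_of_maps_to
      (g := fun σ : Fin N → Bool => (Finset.univ.filter fun i => σ i = true).card)
      (t := Finset.range (N+1))
      (by intro σ _
          simp only [Finset.mem_range, Nat.lt_succ_iff]
          exact (Finset.card_filter_le _ _).trans (by simp))]
    have hterm : ∀ k ∈ Finset.range (N+1),
        (∑ σ ∈ Finset.univ.filter
            (fun σ : Fin N → Bool => (Finset.univ.filter fun i => σ i = true).card = k),
          Real.exp (β / 2 * N * cwMag N σ ^ 2 + β * h * ∑ i, spin (σ i)))
        ≤ Real.exp (N * S) := by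
      intro k _
      set T : ℝ := 2 * k - N with hT
      set t : ℝ := β * (h + T / N) with ht
      set c : ℕ := (Finset.univ.filter
        (fun σ : Fin N → Bool => (Finset.univ.filter fun i => σ i = true).card = k)).card
        with hc
      have hfib : ∀ σ ∈ Finset.univ.filter
          (fun σ : Fin N → Bool => (Finset.univ.filter fun i => σ i = true).card = k),
          (∑ i, spin (σ i)) = T := by
        intro σ hσ
        rw [Finset.mem_filter] at hσ
        rw [cw_spin_sum, hσ.2, hT]
      have hE : ∀ σ ∈ Finset.univ.filter
          (fun σ : Fin N → Bool => (Finset.univ.filter fun i => σ i = true).card = k),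
          Real.exp (β / 2 * N * cwMag N σ ^ 2 + β * h * ∑ i, spin (σ i))
            = Real.exp (β * T ^ 2 / (2 * N) + β * h * T) := by
        intro σ hσ
        rw [cwMag, hfib σ hσ]
        congr 1
        field_simp
      rw [Finset.sum_congr rfl hE, Finset.sum_const, nsmul_eq_mul]
      -- counting bound
      have hcount : (c : ℝ) * Real.exp (t * T)
          ≤ (Real.exp t + Real.exp (-t)) ^ N := by
        rw [← cw_exp_sum N t]
        calc (c : ℝ) * Real.exp (t * T)
            = ∑ σ ∈ Finset.univ.filter
                (fun σ : Fin N → Bool => (Finset.univ.filter fun i => σ i = true).card = k),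
                Real.exp (t * ∑ i, spin (σ i)) := by
              rw [Finset.sum_congr rfl (fun σ hσ => by rw [hfib σ hσ]),
                Finset.sum_const, nsmul_eq_mul]
          _ ≤ ∑ σ : Fin N → Bool, Real.exp (t * ∑ i, spin (σ i)) :=
              Finset.sum_le_sum_of_subset_of_nonneg (Finset.filter_subset _ _)
                (fun σ _ _ => (Real.exp_pos _).le)
      have hexpF : (Real.exp t + Real.exp (-t)) ^ N * Real.exp (-(t * T))
            * Real.exp (β * T ^ 2 / (2 * N) + β * h * T)
          = Real.exp (N * F (T / N)) := by
        have hC : Real.exp t + Real.exp (-t) = 2 * Real.cosh t := by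
          rw [Real.cosh_eq]; ring
        have h2c : (0:ℝ) < 2 * Real.cosh t := by positivity
        rw [hC]
        have : (2 * Real.cosh t) ^ N = Real.exp (N * Real.log (2 * Real.cosh t)) := by
          rw [← Real.log_pow, Real.exp_log (by positivity)]
        rw [this, ← Real.exp_add, ← Real.exp_add, Real.exp_eq_exp]
        rw [Real.log_mul two_ne_zero (Real.cosh_pos t).ne', hF]
        have hTt : β * (h + T / N) = t := ht.symm
        simp only [hTt]
        have hm2 : (T / N) ^ 2 = T ^ 2 / N ^ 2 := by rw [div_pow]
        rw [hm2, ht]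
        field_simp
        ring
      have hFS : F (T / N) ≤ S := le_ciSup hbdd (T / N)
      calc (c : ℝ) * Real.exp (β * T ^ 2 / (2 * N) + β * h * T)
          = (c : ℝ) * Real.exp (t * T)
            * (Real.exp (-(t * T)) * Real.exp (β * T ^ 2 / (2 * N) + β * h * T)) := by
            rw [← mul_assoc, mul_assoc ((c:ℝ)) _ _, ← Real.exp_add]
            simp
        _ ≤ (Real.exp t + Real.exp (-t)) ^ N
            * (Real.exp (-(t * T)) * Real.exp (β * T ^ 2 / (2 * N) + β * h * T)) := by
            apply mul_le_mul_of_nonneg_right hcount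
            positivity
        _ = Real.exp (N * F (T / N)) := by rw [← hexpF]; ring
        _ ≤ Real.exp (N * S) := by
            apply Real.exp_le_exp.2
            exact mul_le_mul_of_nonneg_left hFS hNpos.le
    calc ∑ k ∈ Finset.range (N+1), ∑ σ ∈ Finset.univ.filter
            (fun σ : Fin N → Bool => (Finset.univ.filter fun i => σ i = true).card = k),
          Real.exp (β / 2 * N * cwMag N σ ^ 2 + β * h * ∑ i, spin (σ i))
        ≤ ∑ k ∈ Finset.range (N+1), Real.exp (N * S) := Finset.sum_le_sum hterm
      _ = (N + 1) * Real.exp (N * S) := by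
          rw [Finset.sum_const, Finset.card_range, nsmul_eq_mul]
          push_cast; ring
  have hZpos : 0 < cwZ N β h :=
    Finset.sum_pos (fun σ _ => Real.exp_pos _) ⟨fun _ => true, Finset.mem_univ _⟩
  have hlog : Real.log (cwZ N β h) ≤ Real.log (N + 1) + N * S := by
    calc Real.log (cwZ N β h) ≤ Real.log ((N + 1) * Real.exp (N * S)) :=
          Real.log_le_log hZpos key
      _ = Real.log (N + 1) + N * S := by
          rw [Real.log_mul (by positivity) (Real.exp_ne_zero _), Real.log_exp]
  calc Real.log (cwZ N β h) / N ≤ (Real.log (N + 1) + N * S) / N := by gcongr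
    _ = S + Real.log (N + 1) / N := by field_simp; ring
end
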